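/- Let w ∈ S_n be an involution different from the longest element w₀. Then at least one of the following holds: (i) there exists an involution w' with w < w' in the Bruhat order, inv(w') = inv(w) + 1, and ℓ_θ(w') = ℓ_θ(w) + 1; or (ii) there exist an involution w' and an element s ∈ S_n with w < s < w' in the Bruhat order, inv(w') = inv(s) + 1 = inv(w) + 2, and ℓ_θ(w') = ℓ_θ(w) + 1. -/

import Mathlib

/-- Number of inversions of a permutation of `Fin n`: pairs `i < j` with `w i > w j`. -/
def invNum {n : ℕ} (w : Equiv.Perm (Fin n)) : ℕ :=
  (Finset.univ.filter fun p : Fin n × Fin n => p.1 < p.2 ∧ w p.2 < w p.1).card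

/-- Number of excedances of a permutation of `Fin n`: indices `i` with `w i > i`. -/
def excNum {n : ℕ} (w : Equiv.Perm (Fin n)) : ℕ :=
  (Finset.univ.filter fun i : Fin n => i < w i).card

/-- The θ-length of an involution: `(inv w + exc w) / 2`. -/
def thetaLength {n : ℕ} (w : Equiv.Perm (Fin n)) : ℕ := (invNum w + excNum w) / 2

/-- The Bruhat order on `S_n`, via the rank-matrix characterization:
`u ≤ v` iff for all `i, j`, `#{a ≤ i : u a ≥ j} ≤ #{a ≤ i : v a ≥ j}`. -/
def bruhatLE {n : ℕ} (u v : Equiv.Perm (Fin n)) : Prop :=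
  ∀ i j : Fin n,
    (Finset.univ.filter fun a : Fin n => a ≤ i ∧ j ≤ u a).card ≤
    (Finset.univ.filter fun a : Fin n => a ≤ i ∧ j ≤ v a).card

/-- Strict Bruhat order. -/
def bruhatLT {n : ℕ} (u v : Equiv.Perm (Fin n)) : Prop := bruhatLE u v ∧ u ≠ v

/-!
Since `w ≠ w₀`, some adjacent positions `c ⋖ d` form an ascent `w c < w d`; let `τ = swap c d`.
If `w` fixes `c` and `d`, then `w τ` is an involution with one more inversion and one more
excedance. Otherwise `w c ≠ d` (else the ascent would be a descent), so conjugating by `τ`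
preserves excedances, and `τ w τ` is reached from `w` through `τ w` by two steps each adding one
inversion: together `ℓ_θ` grows by exactly one.

The Bruhat steps `u ≤ u τ` (for any transposition with `u c < u d`) come from the rearrangement
identity `∑ f a g (τ a) = ∑ f a g a + (f c - f d) (g d - g c)`, applied to the indicators
`f = [· ≤ i]` and `g = [j ≤ u ·]` whose product counts the rank matrix entry.
-/

open Equiv Finset

section LinearOrder

variable {α : Type*} [LinearOrder α] {c d i j : α}

theorem swap_lt_swap_of_covBy (hcd : c ⋖ d) (hij : i < j) (hne : ¬(i = c ∧ j = d)) :
    swap c d i < swap c d j := by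
  have hi : i ≤ c ∨ d ≤ i := (le_or_gt d i).symm.imp_left hcd.le_of_lt
  have hj : j ≤ c ∨ d ≤ j := (le_or_gt d j).symm.imp_left hcd.le_of_lt
  have := hcd.lt
  rw [swap_apply_def, swap_apply_def]
  split_ifs <;> grind

theorem swap_lt_swap_iff_of_covBy (hcd : c ⋖ d) (hcd' : ¬(i = c ∧ j = d))
    (hdc : ¬(i = d ∧ j = c)) : swap c d i < swap c d j ↔ i < j := by
  refine ⟨fun h => ?_, fun h => swap_lt_swap_of_covBy hcd h hcd'⟩
  simpa using swap_lt_swap_of_covBy hcd h (by simpa [swap_apply_eq_iff] using hdc)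

end LinearOrder

theorem sum_mul_comp_swap {ι R : Type*} [Fintype ι] [DecidableEq ι] [CommRing R]
    (f g : ι → R) {c d : ι} (hcd : c ≠ d) :
    ∑ a, f a * g (swap c d a) = ∑ a, f a * g a + (f c - f d) * (g d - g c) := by
  rw [← sub_eq_iff_eq_add', ← sum_sub_distrib, Fintype.sum_eq_add c d hcd]
  · simp only [swap_apply_left, swap_apply_right]
    ring
  · rintro a ⟨hac, had⟩
    rw [swap_apply_of_ne_of_ne hac had, sub_self]

section Perm

variable {n : ℕ}

theorem bruhatLE_mul_swap {u : Perm (Fin n)} {c d : Fin n} (hcd : c < d) (h : u c < u d) :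
    bruhatLE u (u * swap c d) := by
  intro i j
  set f : Fin n → ℤ := fun a => if a ≤ i then 1 else 0
  set g : Fin n → ℤ := fun a => if j ≤ u a then 1 else 0
  have hf : 0 ≤ f c - f d := by
    simp only [f]; split_ifs <;> grind
  have hg : 0 ≤ g d - g c := by
    simp only [g]; split_ifs <;> grind
  have hcount : ∀ v : Fin n → Fin n,
      (#{a | a ≤ i ∧ j ≤ u (v a)} : ℤ) = ∑ a, f a * g (v a) := by
    intro v
    simp only [natCast_card_filter, f, g, ite_zero_mul_ite_zero, mul_one]
  have base : (#{a | a ≤ i ∧ j ≤ u a} : ℤ) = ∑ a, f a * g a := hcount id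
  have swapped := hcount (swap c d)
  rw [sum_mul_comp_swap f g hcd.ne] at swapped
  have := mul_nonneg hf hg
  change #{a | a ≤ i ∧ j ≤ u a} ≤ #{a | a ≤ i ∧ j ≤ u (swap c d a)}
  omega

theorem bruhatLE_swap_mul {u : Perm (Fin n)} {c d : Fin n} (hcd : c < d) (h : u⁻¹ c < u⁻¹ d) :
    bruhatLE u (swap c d * u) := by
  rw [swap_mul_eq_mul_swap]
  exact bruhatLE_mul_swap h (by simpa using hcd)

theorem bruhatLT_of_bruhatLE_of_invNum_lt {u v : Perm (Fin n)} (hle : bruhatLE u v)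
    (hlt : invNum u < invNum v) : bruhatLT u v :=
  ⟨hle, ne_of_apply_ne invNum hlt.ne⟩

theorem invNum_inv (u : Perm (Fin n)) : invNum u⁻¹ = invNum u := by
  refine card_equiv ((Equiv.prodComm _ _).trans (u.prodCongr u)).symm fun p => ?_
  simp [and_comm]

theorem invNum_mul_swap_of_covBy {u : Perm (Fin n)} {c d : Fin n} (hcd : c ⋖ d)
    (h : u c < u d) : invNum (u * swap c d) = invNum u + 1 := by
  have hset : univ.filter
        (fun p : Fin n × Fin n => p.1 < p.2 ∧ (u * swap c d) p.2 < (u * swap c d) p.1) =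
      insert (c, d) ((univ.filter fun p : Fin n × Fin n => p.1 < p.2 ∧ u p.2 < u p.1).map
          ((swap c d).prodCongr (swap c d)).toEmbedding) := by
    ext ⟨i, j⟩
    simp only [mem_insert, mem_map_equiv, mem_filter, mem_univ, true_and, prodCongr_symm,
      symm_swap, prodCongr_apply, Prod.mk.injEq]
    simp only [Perm.mul_apply, Prod.map_fst, Prod.map_snd]
    by_cases hcd' : i = c ∧ j = d
    · obtain ⟨rfl, rfl⟩ := hcd'
      simp [hcd.lt, h]
    by_cases hdc : i = d ∧ j = c
    · obtain ⟨rfl, rfl⟩ := hdc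
      simp [hcd.lt.not_gt, hcd.lt.ne', h.not_gt]
    rw [swap_lt_swap_iff_of_covBy hcd hcd' hdc]
    simp [hcd']
  rw [invNum, hset, card_insert_of_notMem, card_map]
  · rfl
  simpa [mem_map_equiv] using fun hdc => absurd hdc hcd.lt.not_gt

theorem invNum_swap_mul_of_covBy {u : Perm (Fin n)} {c d : Fin n} (hcd : c ⋖ d)
    (h : u⁻¹ c < u⁻¹ d) : invNum (swap c d * u) = invNum u + 1 := by
  rw [← invNum_inv, mul_inv_rev, swap_inv, invNum_mul_swap_of_covBy hcd h, invNum_inv]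

theorem excNum_mul_swap_of_fixed {w : Perm (Fin n)} {c d : Fin n} (hcd : c < d)
    (hc : w c = c) (hd : w d = d) : excNum (w * swap c d) = excNum w + 1 := by
  have hset : univ.filter (fun a : Fin n => a < (w * swap c d) a) =
      insert c (univ.filter fun a : Fin n => a < w a) := by
    ext a
    simp only [mem_insert, mem_filter, mem_univ, true_and]
    rw [Perm.mul_apply, swap_apply_def]
    split_ifs <;> grind
  rw [excNum, hset, card_insert_of_notMem (by simp [hc])]
  rfl

theorem excNum_swap_mul_swap_of_covBy {w : Perm (Fin n)} {c d : Fin n} (hcd : c ⋖ d)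
    (hc : w c ≠ d) (hd : w d ≠ c) : excNum (swap c d * w * swap c d) = excNum w := by
  refine card_equiv (swap c d) fun a => ?_
  obtain ⟨b, rfl⟩ := (swap c d).surjective a
  simp only [mem_filter, mem_univ, true_and]
  simp only [Perm.mul_apply, swap_apply_self]
  refine swap_lt_swap_iff_of_covBy hcd ?_ ?_
  · rintro ⟨rfl, h⟩; exact hc h
  · rintro ⟨rfl, h⟩; exact hd h

theorem exists_covBy_lt_of_ne_revPerm {w : Perm (Fin n)} (hne : w ≠ Fin.revPerm) :
    ∃ c d : Fin n, c ⋖ d ∧ w c < w d := by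
  by_contra! hdesc
  have hanti : StrictAnti w := (strictAnti_iff_forall_covBy w).2 fun c d hcd =>
    (hdesc c d hcd).lt_of_ne (w.injective.ne hcd.lt.ne')
  refine hne (Equiv.ext fun a => ?_)
  have hmono : StrictMono (Fin.rev ∘ w) := fun a b hab => Fin.rev_lt_rev.2 (hanti hab)
  simpa using congrArg Fin.rev (hmono.apply_eq (x := a))

theorem exists_ascent_of_fixed {w : Perm (Fin n)} (hw : w * w = 1) {c d : Fin n}
    (hcd : c ⋖ d) (hc : w c = c) (hd : w d = d) :
    ∃ w' : Perm (Fin n), w' * w' = 1 ∧ bruhatLT w w' ∧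
      invNum w' = invNum w + 1 ∧ thetaLength w' = thetaLength w + 1 := by
  have hasc : w c < w d := by rw [hc, hd]; exact hcd.lt
  have hinv := invNum_mul_swap_of_covBy hcd hasc
  have hexc := excNum_mul_swap_of_fixed hcd.lt hc hd
  have hcomm : Commute (swap c d) w := by
    rw [Commute, SemiconjBy, swap_mul_eq_mul_swap, Perm.inv_eq_iff_eq.2 hc.symm,
      Perm.inv_eq_iff_eq.2 hd.symm]
  refine ⟨w * swap c d, ?_, bruhatLT_of_bruhatLE_of_invNum_lt (bruhatLE_mul_swap hcd.lt hasc)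
    (by omega), hinv, ?_⟩
  · rw [hcomm.mul_mul_mul_comm, hw, swap_mul_self, one_mul]
  · simp only [thetaLength, hinv, hexc]
    omega

theorem exists_double_ascent_of_not_fixed {w : Perm (Fin n)} (hw : w * w = 1) {c d : Fin n}
    (hcd : c ⋖ d) (hasc : w c < w d) (hfix : ¬(w c = c ∧ w d = d)) :
    ∃ w' s : Perm (Fin n), w' * w' = 1 ∧ bruhatLT w s ∧ bruhatLT s w' ∧
      invNum w' = invNum s + 1 ∧ invNum w' = invNum w + 2 ∧
      thetaLength w' = thetaLength w + 1 := by
  have hwinv : w⁻¹ = w := inv_eq_of_mul_eq_one_right hw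
  have hww : ∀ x, w (w x) = x := fun x => by rw [← Perm.mul_apply, hw, Perm.one_apply]
  have hwc : w c ≠ d := by
    intro h
    have h' : w d = c := by rw [← h, hww]
    rw [h, h'] at hasc
    exact lt_asymm hcd.lt hasc
  have hwd : w d ≠ c := fun h => hwc (by rw [← h, hww])
  have hs : invNum (swap c d * w) = invNum w + 1 := invNum_swap_mul_of_covBy hcd (by rwa [hwinv])
  have hs_asc : (swap c d * w) c < (swap c d * w) d := swap_lt_swap_of_covBy hcd hasc hfix
  have hw' := invNum_mul_swap_of_covBy hcd hs_asc
  refine ⟨swap c d * w * swap c d, swap c d * w, ?_,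
    bruhatLT_of_bruhatLE_of_invNum_lt (bruhatLE_swap_mul hcd.lt (by rwa [hwinv])) (by omega),
    bruhatLT_of_bruhatLE_of_invNum_lt (bruhatLE_mul_swap hcd.lt hs_asc) (by omega),
    hw', by omega, ?_⟩
  · simp only [mul_assoc, swap_mul_self_mul]
    rw [← mul_assoc w, hw, one_mul, swap_mul_self]
  · simp only [thetaLength, hw', hs, excNum_swap_mul_swap_of_covBy hcd hwc hwd]
    omega

end Perm

/-- Corollary 6.6: every involution `w` of `S_n` different from the longest element `w₀`
admits an involution `w'` strictly above it in Bruhat order with either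
`inv w' = inv w + 1` (case (i)) or, via an intermediate element `s`,
`inv w' = inv s + 1 = inv w + 2` (case (ii)); in both cases `ℓ_θ(w') = ℓ_θ(w) + 1`. -/
theorem involution_ascent {n : ℕ} (w : Equiv.Perm (Fin n)) (hw : w * w = 1)
    (hne : w ≠ (Fin.revPerm : Equiv.Perm (Fin n))) :
    (∃ w' : Equiv.Perm (Fin n), w' * w' = 1 ∧ bruhatLT w w' ∧
      invNum w' = invNum w + 1 ∧ thetaLength w' = thetaLength w + 1) ∨
    (∃ w' s : Equiv.Perm (Fin n), w' * w' = 1 ∧ bruhatLT w s ∧ bruhatLT s w' ∧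
      invNum w' = invNum s + 1 ∧ invNum w' = invNum w + 2 ∧
      thetaLength w' = thetaLength w + 1) := by
  obtain ⟨c, d, hcd, hasc⟩ := exists_covBy_lt_of_ne_revPerm hne
  by_cases hfix : w c = c ∧ w d = d
  · exact .inl (exists_ascent_of_fixed hw hcd hfix.1 hfix.2)
  · exact .inr (exists_double_ascent_of_not_fixed hw hcd hasc hfix)
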